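/- arXiv:1301.5102 — 2 statements merged into one kernel-verified Lean document; each statement's English description precedes it below -/
import Mathlib

section
/- Every element u of the shuffle algebra S admits a unique decomposition u = Σ_{j=0}^N w_j ⧢ x0^j with w_0, …, w_N ∈ S^0 (where x0^j denotes the word consisting of j copies of x0); that is, S is a polynomial algebra in x0 with respect to the shuffle product, with coefficients in S^0. -/
/-!
Write every word uniquely as `v x0^m` with `v` empty or ending in `x1`. For such `v`,
`v ⧢ x0^m` is `v x0^m` plus words whose last `x1` is followed by fewer than `m` letters `x0`,
so `(w_j)_j ↦ Σ_j w_j ⧢ x0^j` is unitriangular with respect to the number of trailing `x0`s: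
existence follows by induction on that number, and uniqueness by reading off the coefficient
of `v₀ x0^J` for the top degree `J`.
-/

open scoped BigOperators

namespace MZVRH

noncomputable section

/-- A word over the two-letter alphabet: `false` stands for `x0`, `true` for `x1`. -/
abbrev Word : Type := List Bool

/-- The shuffle algebra `S`: the free ℂ-vector space on words. -/
abbrev S : Type := Word →₀ ℂ

/-- The word `w` viewed as an element of `S`. -/
def wordS (w : Word) : S := Finsupp.single w 1

/-- Shuffle product of two words, as an element of `S`. -/
def shWord : Word → Word → S
  | [], v => Finsupp.single v 1
  | u, [] => Finsupp.single u 1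
  | a :: u, b :: v =>
      (shWord u (b :: v)).mapDomain (a :: ·)
        + (shWord (a :: u) v).mapDomain (b :: ·)
  termination_by u v => u.length + v.length
  decreasing_by all_goals simp [List.length_cons]

/-- The bilinear extension of the shuffle product to `S`. -/
def sh (x y : S) : S := x.sum fun u a => y.sum fun v b => (a * b) • shWord u v

/-- The word `x0^j`. -/
def x0pow (j : ℕ) : Word := List.replicate j false

/-- The word `x1^i`. -/
def x1pow (i : ℕ) : Word := List.replicate i true

/-- A word is empty or ends in `x1`. -/
def EndsInX1 (w : Word) : Prop := w = [] ∨ w.getLast? = some true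

/-- A word is empty or begins with `x0` and ends in `x1`. -/
def BeginsEndsX0X1 (w : Word) : Prop :=
  w = [] ∨ (w.head? = some false ∧ w.getLast? = some true)

/-- Membership in the subspace `S^0` spanned by the empty word and words ending in `x1`. -/
def InS0 (x : S) : Prop := ∀ w ∈ x.support, EndsInX1 w

/-- Membership in the subspace `S^{10}` spanned by the empty word and words beginning
with `x0` and ending in `x1`. -/
def InS10 (x : S) : Prop := ∀ w ∈ x.support, BeginsEndsX0X1 w

/-- `Σ_j w_j ⧢ x0^j` for a finitely supported family `f : ℕ →₀ S`. -/
def decomp0Sum (f : ℕ →₀ S) : S := f.sum fun j w => sh w (wordS (x0pow j))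

/-- `Σ_{i,j} x1^i ⧢ w_{ij} ⧢ x0^j` for a finitely supported family `f : ℕ × ℕ →₀ S`. -/
def decomp10Sum (f : ℕ × ℕ →₀ S) : S :=
  f.sum fun p w => sh (wordS (x1pow p.1)) (sh w (wordS (x0pow p.2)))

/-- `f` is a decomposition of `u` with coefficients in `S^0`. -/
def HasDecomp0 (u : S) (f : ℕ →₀ S) : Prop := (∀ j, InS0 (f j)) ∧ u = decomp0Sum f

/-- `f` is a decomposition of `u` with coefficients in `S^{10}`. -/
def HasDecomp10 (u : S) (f : ℕ × ℕ →₀ S) : Prop :=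
  (∀ p, InS10 (f p)) ∧ u = decomp10Sum f

open Classical in
/-- The regularization map `reg^0 : S → S^0`, the constant term of the decomposition
of `u` as a polynomial in `x0` with coefficients in `S^0`. -/
def reg0 (u : S) : S := if h : ∃ f, HasDecomp0 u f then h.choose 0 else 0

open Classical in
/-- The regularization map `reg^{10} : S → S^{10}`, the constant term of the decomposition
of `u` as a polynomial in `x0, x1` with coefficients in `S^{10}`. -/
def reg10 (u : S) : S := if h : ∃ f, HasDecomp10 u f then h.choose (0, 0) else 0

/-- `τ`: reverse the word and exchange `x0` with `x1`. -/
def tau (w : Word) : Word := (w.map (fun b => !b)).reverse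

/-- The composition `(k1, …, kr)` attached to a word `x0^{k1-1} x1 ⋯ x0^{kr-1} x1 ∈ S^0`. -/
def toComp : Word → List ℕ
  | [] => []
  | false :: w =>
      match toComp w with
      | [] => []
      | k :: ks => (k + 1) :: ks
  | true :: w => 1 :: toComp w

/-- Strictly decreasing tuples of positive integers `n1 > n2 > ⋯ > nr > 0`. -/
def Tuples (r : ℕ) : Type := {f : Fin r → ℕ // StrictAnti f ∧ ∀ i, 0 < f i}

/-- The multiple polylogarithm `Li_{k1,…,kr}(z) = Σ_{n1 > ⋯ > nr > 0} z^{n1}/(n1^{k1} ⋯ nr^{kr})`,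
attached to a composition `ks = (k1, …, kr)`; equal to `1` for the empty composition. -/
def LiComp (ks : List ℕ) (z : ℂ) : ℂ :=
  ∑' n : Tuples ks.length,
    (if h : 0 < ks.length then z ^ n.1 ⟨0, h⟩ else 1) /
      ∏ i : Fin ks.length, (n.1 i : ℂ) ^ ks.get i

/-- The multiple zeta value `ζ(k1,…,kr) = Σ_{n1 > ⋯ > nr > 0} 1/(n1^{k1} ⋯ nr^{kr})`
attached to a composition; equal to `1` for the empty composition. -/
def zetaComp (ks : List ℕ) : ℂ :=
  ∑' n : Tuples ks.length, 1 / ∏ i : Fin ks.length, (n.1 i : ℂ) ^ ks.get i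

/-- The ℂ-linear extension of `w ↦ Li(w; z)` to elements of `S` supported on `S^0` words. -/
def LiS0 (x : S) (z : ℂ) : ℂ := x.sum fun w c => c * LiComp (toComp w) z

/-- The ℂ-linear extension of `w ↦ ζ(w)` to elements of `S` supported on `S^{10}` words. -/
def zetaS (x : S) : ℂ := x.sum fun w c => c * zetaComp (toComp w)

open Classical in
/-- The extended multiple polylogarithm on `S`:
`Li(u; z) = Σ_j Li(w_j; z) (log z)^j / j!` where `u = Σ_j w_j ⧢ x0^j` with `w_j ∈ S^0`. -/
def Li (u : S) (z : ℂ) : ℂ :=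
  if h : ∃ f, HasDecomp0 u f then
    h.choose.sum fun j w => LiS0 w z * Complex.log z ^ j / (Nat.factorial j : ℂ)
  else 0

/-- The domain `D0 = ℂ ∖ {x ∈ ℝ : x ≥ 1}`. -/
def D0 : Set ℂ := {z | ¬ (z.im = 0 ∧ 1 ≤ z.re)}

/-- The domain `D1 = ℂ ∖ {x ∈ ℝ : x ≤ 0}`. -/
def D1 : Set ℂ := {z | ¬ (z.im = 0 ∧ z.re ≤ 0)}

/-- The ℂ-linear extension of a word-indexed family of functions to `S`. -/
def extLin (h : Word → ℂ → ℂ) (x : S) (z : ℂ) : ℂ := x.sum fun w c => c * h w z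

/-- A solution of the additive Riemann–Hilbert problem for multiple polylogarithms. -/
def RHSol (h0 h1 : Word → ℂ → ℂ) : Prop :=
  -- (0) shuffle homomorphisms with prescribed value on `x0`
  (∀ z ∈ D0 ∩ D1,
      (h0 [] z = 1 ∧ h1 [] z = 1) ∧
      (∀ u v : Word,
          extLin h0 (sh (wordS u) (wordS v)) z = h0 u z * h0 v z ∧
          extLin h1 (sh (wordS u) (wordS v)) z = h1 u z * h1 v z) ∧
      h0 [false] z = Complex.log z ∧ h1 [false] z = Complex.log (1 - z)) ∧
  -- (1) holomorphy and the functional equation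
  (∀ w : Word,
      DifferentiableOn ℂ (fun z => extLin h0 (reg0 (wordS w)) z) D0 ∧
      DifferentiableOn ℂ (fun z => extLin h1 (reg0 (wordS w)) z) D1 ∧
      ∀ z ∈ D0 ∩ D1,
        ∑ k ∈ Finset.range (w.length + 1),
            h1 (tau (w.take k)) z * h0 (w.drop k) z = zetaS (reg10 (wordS w))) ∧
  -- (2) asymptotic condition at infinity
  (∀ w : Word,
      Filter.Tendsto (deriv fun z => extLin h0 (reg0 (wordS w)) z)
        (Bornology.cobounded ℂ ⊓ Filter.principal D0) (nhds 0) ∧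
      Filter.Tendsto (deriv fun z => extLin h1 (reg0 (wordS w)) z)
        (Bornology.cobounded ℂ ⊓ Filter.principal D1) (nhds 0)) ∧
  -- (3) normalization at the origin
  (∀ w : Word, extLin h0 (reg0 (wordS w)) 0 = 0)

lemma EndsInX1.of_cons {a : Bool} {u : Word} (h : EndsInX1 (a :: u)) : EndsInX1 u := by
  rcases u with _ | ⟨b, w⟩
  · exact Or.inl rfl
  · rcases h with h | h
    · simp at h
    · exact Or.inr (by simpa using h)

lemma EndsInX1.eq_append_x1 {v : Word} (hv : EndsInX1 v) (hne : v ≠ []) :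
    ∃ p, v = p ++ [true] := by
  rcases hv with h | h
  · exact absurd h hne
  · exact ⟨v.dropLast, (List.dropLast_append_getLast? _ h).symm⟩

lemma endsInX1_append_x1 (p : Word) : EndsInX1 (p ++ [true]) := Or.inr (by simp)

lemma x0pow_succ' (k : ℕ) : x0pow (k + 1) = x0pow k ++ [false] := List.replicate_succ' ..

lemma exists_eq_append_x0pow (w : Word) : ∃ v k, EndsInX1 v ∧ w = v ++ x0pow k := by
  induction w using List.reverseRecOn with
  | nil => exact ⟨[], 0, Or.inl rfl, rfl⟩
  | append_singleton w a ih =>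
    cases a with
    | false =>
      obtain ⟨v, k, hv, rfl⟩ := ih
      exact ⟨v, k + 1, hv, by rw [x0pow_succ', List.append_assoc]⟩
    | true => exact ⟨w ++ [true], 0, endsInX1_append_x1 w, by simp [x0pow]⟩

lemma not_endsInX1_append_x0pow_succ (v : Word) (k : ℕ) : ¬ EndsInX1 (v ++ x0pow (k + 1)) := by
  rintro (h | h)
  · simp [x0pow] at h
  · simp [x0pow_succ'] at h

lemma eq_of_append_x0pow_eq {v v' : Word} (hv : EndsInX1 v) (hv' : EndsInX1 v') {j k : ℕ}
    (h : v ++ x0pow j = v' ++ x0pow k) : v = v' ∧ j = k := by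
  wlog hjk : j ≤ k generalizing v v' j k
  · exact (this hv' hv h.symm (by omega)).imp Eq.symm Eq.symm
  obtain ⟨d, rfl⟩ := Nat.exists_eq_add_of_le hjk
  have hv_eq : v = v' ++ x0pow d := by
    rw [x0pow, x0pow, add_comm, List.replicate_add, ← List.append_assoc] at h
    exact List.append_cancel_right h
  cases d with
  | zero => exact ⟨by simpa [x0pow] using hv_eq, rfl⟩
  | succ d => exact absurd (hv_eq ▸ hv) (not_endsInX1_append_x0pow_succ v' d)

def FewerTrailingX0 (m : ℕ) : Set Word := {s | ∃ p k, k < m ∧ s = p ++ true :: x0pow k}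

lemma fewerTrailingX0_mono : Monotone FewerTrailingX0 :=
  fun _ _ hmn _ ⟨p, k, hk, hs⟩ => ⟨p, k, hk.trans_le hmn, hs⟩

lemma mapDomain_cons_mem_supported_fewerTrailingX0 {m : ℕ} {x : S}
    (hx : x ∈ Finsupp.supported ℂ ℂ (FewerTrailingX0 m)) (a : Bool) :
    x.mapDomain (a :: ·) ∈ Finsupp.supported ℂ ℂ (FewerTrailingX0 m) := by
  classical
  rw [Finsupp.mem_supported] at hx ⊢
  intro s hs
  obtain ⟨t, ht, rfl⟩ := Finset.mem_image.1 (Finsupp.mapDomain_support hs)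
  obtain ⟨p, k, hk, rfl⟩ := hx ht
  exact ⟨a :: p, k, hk, rfl⟩

lemma shWord_cons_cons (a b : Bool) (u v : Word) :
    shWord (a :: u) (b :: v) =
      (shWord u (b :: v)).mapDomain (a :: ·) + (shWord (a :: u) v).mapDomain (b :: ·) := by
  rw [shWord]

lemma shWord_x0pow_sub_mem_supported : ∀ (v : Word), EndsInX1 v → ∀ m : ℕ,
    shWord v (x0pow m) - wordS (v ++ x0pow m) ∈ Finsupp.supported ℂ ℂ (FewerTrailingX0 m)
  | [], _, m => by simp [shWord, wordS]
  | a :: u, _, 0 => by simp [shWord, wordS, x0pow]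
  | a :: u, hv, k + 1 => by
    have h₁ := shWord_x0pow_sub_mem_supported u hv.of_cons (k + 1)
    have h₂ := shWord_x0pow_sub_mem_supported (a :: u) hv k
    obtain ⟨p, hp⟩ := hv.eq_append_x1 (List.cons_ne_nil a u)
    have hsplit : shWord (a :: u) (x0pow (k + 1)) - wordS (a :: u ++ x0pow (k + 1)) =
        (shWord u (x0pow (k + 1)) - wordS (u ++ x0pow (k + 1))).mapDomain (a :: ·) +
        (shWord (a :: u) (x0pow k) - wordS (a :: u ++ x0pow k)).mapDomain (false :: ·) +
        Finsupp.single (false :: (a :: u ++ x0pow k)) 1 := by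
      rw [show x0pow (k + 1) = false :: x0pow k from rfl, shWord_cons_cons, Finsupp.mapDomain_sub,
        Finsupp.mapDomain_sub]
      simp only [wordS, Finsupp.mapDomain_single, List.cons_append]
      abel
    rw [hsplit]
    have h₂' := Finsupp.supported_mono (fewerTrailingX0_mono k.le_succ) h₂
    refine add_mem (add_mem (mapDomain_cons_mem_supported_fewerTrailingX0 h₁ a)
      (mapDomain_cons_mem_supported_fewerTrailingX0 h₂' false))
      (Finsupp.single_mem_supported ℂ 1 ⟨false :: p, k, k.lt_succ_self, by simp [hp]⟩)
termination_by v _ m => v.length + m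

def shRight (y : S) : S →ₗ[ℂ] S := Finsupp.linearCombination ℂ fun u => sh (wordS u) y

lemma shRight_apply (x y : S) : shRight y x = sh x y := by
  simp only [shRight, sh, wordS, Finsupp.linearCombination_apply, Finsupp.smul_sum, smul_smul]
  refine Finsupp.sum_congr fun u _ => ?_
  rw [Finsupp.sum_single_index (by simp)]
  simp only [one_mul]

lemma sh_wordS_wordS (v w : Word) : sh (wordS v) (wordS w) = shWord v w := by
  simp [sh, wordS]

def decomp0Lin : (ℕ →₀ S) →ₗ[ℂ] S := Finsupp.lsum ℂ fun j => shRight (wordS (x0pow j))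

lemma decomp0Lin_apply (f : ℕ →₀ S) : decomp0Lin f = decomp0Sum f := by
  simp only [decomp0Lin, decomp0Sum, Finsupp.lsum_apply]
  exact Finsupp.sum_congr fun j _ => shRight_apply _ _

def S0 : Submodule ℂ S := Finsupp.supported ℂ ℂ {w | EndsInX1 w}

lemma inS0_iff_mem_S0 {x : S} : InS0 x ↔ x ∈ S0 := by
  simp [InS0, S0, Finsupp.mem_supported, Set.subset_def]

def S0Coeffs : Submodule ℂ (ℕ →₀ S) := ⨅ j, S0.comap (Finsupp.lapply j)

lemma mem_S0Coeffs {f : ℕ →₀ S} : f ∈ S0Coeffs ↔ ∀ j, f j ∈ S0 := by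
  simp [S0Coeffs, Submodule.mem_iInf]

lemma wordS_mem_S0 {v : Word} (hv : EndsInX1 v) : wordS v ∈ S0 :=
  Finsupp.single_mem_supported ℂ 1 hv

lemma single_mem_S0Coeffs (k : ℕ) {x : S} (hx : x ∈ S0) : Finsupp.single k x ∈ S0Coeffs := by
  refine mem_S0Coeffs.2 fun j => ?_
  rw [Finsupp.single_apply]
  split_ifs
  exacts [hx, zero_mem _]

lemma wordS_append_x0pow_mem_map (k : ℕ) :
    ∀ v, EndsInX1 v → wordS (v ++ x0pow k) ∈ S0Coeffs.map decomp0Lin := by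
  induction k using Nat.strong_induction_on with
  | _ k ih =>
  intro v hv
  have hmain : shWord v (x0pow k) ∈ S0Coeffs.map decomp0Lin :=
    ⟨Finsupp.single k (wordS v), single_mem_S0Coeffs k (wordS_mem_S0 hv), by
      rw [decomp0Lin_apply, decomp0Sum, Finsupp.sum_single_index (by simp [sh]),
        sh_wordS_wordS]⟩
  have hlower : Finsupp.supported ℂ ℂ (FewerTrailingX0 k) ≤ S0Coeffs.map decomp0Lin := by
    rw [Finsupp.supported_eq_span_single, Submodule.span_le]
    rintro _ ⟨_, ⟨p, k', hk', rfl⟩, rfl⟩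
    simpa [wordS] using ih k' hk' (p ++ [true]) (endsInX1_append_x1 p)
  simpa using sub_mem hmain (hlower (shWord_x0pow_sub_mem_supported v hv k))

lemma map_decomp0Lin_S0Coeffs : S0Coeffs.map decomp0Lin = ⊤ := by
  refine Submodule.eq_top_iff'.2 fun u => ?_
  induction u using Finsupp.induction_linear with
  | zero => exact zero_mem _
  | add _ _ hx hy => exact add_mem hx hy
  | single w c =>
    obtain ⟨v, k, hv, rfl⟩ := exists_eq_append_x0pow w
    simpa [wordS] using Submodule.smul_mem _ c (wordS_append_x0pow_mem_map k v hv)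

lemma shWord_x0pow_apply {v v₀ : Word} (hv : EndsInX1 v) (hv₀ : EndsInX1 v₀) {j J : ℕ}
    (hj : j ≤ J) :
    shWord v (x0pow j) (v₀ ++ x0pow J) = if v = v₀ ∧ j = J then 1 else 0 := by
  have hlower : (shWord v (x0pow j) - wordS (v ++ x0pow j)) (v₀ ++ x0pow J) = 0 := by
    refine Finsupp.notMem_support_iff.1 fun hmem => ?_
    obtain ⟨p, k, hk, hpk⟩ :=
      (Finsupp.mem_supported ℂ _).1 (shWord_x0pow_sub_mem_supported v hv j) hmem
    have := (eq_of_append_x0pow_eq hv₀ (endsInX1_append_x1 p) (by simpa using hpk)).2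
    omega
  rw [Finsupp.sub_apply, sub_eq_zero] at hlower
  rw [hlower, wordS, Finsupp.single_apply]
  refine if_congr ⟨eq_of_append_x0pow_eq hv hv₀, ?_⟩ rfl rfl
  rintro ⟨rfl, rfl⟩
  rfl

lemma sh_x0pow_apply {x : S} (hx : x ∈ S0) {v₀ : Word} (hv₀ : EndsInX1 v₀) {j J : ℕ}
    (hj : j ≤ J) : sh x (wordS (x0pow j)) (v₀ ++ x0pow J) = if j = J then x v₀ else 0 := by
  let lhs : S →ₗ[ℂ] ℂ := (Finsupp.lapply (v₀ ++ x0pow J)).comp (shRight (wordS (x0pow j)))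
  let rhs : S →ₗ[ℂ] ℂ := if j = J then Finsupp.lapply v₀ else 0
  have hbasis : Set.EqOn lhs rhs ((fun v => Finsupp.single v 1) '' {w | EndsInX1 w}) := by
    rintro _ ⟨v, hv, rfl⟩
    have := shWord_x0pow_apply hv hv₀ hj
    simp only [lhs, LinearMap.comp_apply, shRight_apply, Finsupp.lapply_apply]
    rw [show Finsupp.single v 1 = wordS v from rfl, sh_wordS_wordS, this]
    by_cases hjJ : j = J <;> simp [rhs, hjJ, wordS, Finsupp.single_apply]
  have := LinearMap.eqOn_span hbasis (by rwa [← Finsupp.supported_eq_span_single])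
  by_cases hjJ : j = J <;> simpa [lhs, rhs, shRight_apply, hjJ] using this

lemma decomp0Sum_apply_of_le {f : ℕ →₀ S} (hf : f ∈ S0Coeffs) {J : ℕ}
    (hJ : ∀ j ∈ f.support, j ≤ J) {v₀ : Word} (hv₀ : EndsInX1 v₀) :
    decomp0Sum f (v₀ ++ x0pow J) = f J v₀ := by
  rw [decomp0Sum, Finsupp.sum_apply, Finsupp.sum,
    Finset.sum_congr rfl fun j hj => sh_x0pow_apply (mem_S0Coeffs.1 hf j) hv₀ (hJ j hj),
    Finset.sum_ite_eq']
  split_ifs with hJs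
  · rfl
  · simp [Finsupp.notMem_support_iff.1 hJs]

lemma eq_zero_of_decomp0Sum_eq_zero {f : ℕ →₀ S} (hf : f ∈ S0Coeffs) (h : decomp0Sum f = 0) :
    f = 0 := by
  by_contra hne
  have hs := Finsupp.support_nonempty_iff.2 hne
  refine Finsupp.mem_support_iff.1 (f.support.max'_mem hs) (Finsupp.ext fun v₀ => ?_)
  by_cases hv₀ : EndsInX1 v₀
  · rw [← decomp0Sum_apply_of_le hf (fun j hj => f.support.le_max' j hj) hv₀, h]
    rfl
  · exact Finsupp.notMem_support_iff.1 fun hmem =>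
      hv₀ (inS0_iff_mem_S0.2 (mem_S0Coeffs.1 hf _) v₀ hmem)

lemma decomp0Sum_injOn : Set.InjOn decomp0Sum S0Coeffs := by
  intro f hf g hg hfg
  -- `sub_mem` and `map_sub` do not see through the nested `Finsupp` instances on `ℕ →₀ S`.
  have hsub : f - g ∈ S0Coeffs := mem_S0Coeffs.2 fun j => by
    rw [Finsupp.sub_apply]
    exact sub_mem (mem_S0Coeffs.1 hf j) (mem_S0Coeffs.1 hg j)
  have hzero : decomp0Sum (f - g) = 0 := by
    have h : decomp0Lin (f - g) = decomp0Lin f - decomp0Lin g :=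
      map_sub decomp0Lin.toAddMonoidHom f g
    rwa [decomp0Lin_apply, decomp0Lin_apply, decomp0Lin_apply, hfg, sub_self] at h
  ext j : 1
  simpa [sub_eq_zero] using DFunLike.congr_fun (eq_zero_of_decomp0Sum_eq_zero hsub hzero) j

/-- Every element `u` of the shuffle algebra `S` admits a unique
decomposition `u = Σ_j w_j ⧢ x0^j` with all `w_j ∈ S^0`; i.e. `S = S^0[x0]`. -/
theorem shuffle_poly_x0 (u : S) :
    ∃! f : ℕ →₀ S, (∀ j, InS0 (f j)) ∧ u = decomp0Sum f := by
  simp only [inS0_iff_mem_S0, ← mem_S0Coeffs]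
  obtain ⟨f, hf, hfu⟩ : u ∈ S0Coeffs.map decomp0Lin := map_decomp0Lin_S0Coeffs ▸ trivial
  rw [decomp0Lin_apply] at hfu
  exact ⟨f, ⟨hf, hfu.symm⟩, fun g ⟨hg, hgu⟩ => decomp0Sum_injOn hg hf (hgu ▸ hfu).symm⟩

end

end MZVRH
end

section
/- For every nonempty word w ∈ S^{10} (equivalently, w = x0^{k1−1} x1 ⋯ x0^{kr−1} x1 with k1 ≥ 2), the multiple polylogarithm Li(w; z) tends to the multiple zeta value ζ(w) as z tends to 1 from the left within (0,1); in particular the series defining ζ(w) converges. -/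
/-!
Send a tuple `n₁ > ⋯ > n_r > 0` to its gaps `n_i - n_{i+1}` (with `n_{r+1} = 0`); this is an
injection into `ℕ^r`. Every gap is at most `n_i` and at most `n₁`, so with `p = 1 + 1/r` the
product of the `p`-th powers of the gaps is at most `n₁ ∏ n_i ≤ ∏ n_i^{k_i}`, using `k₁ ≥ 2`.
Hence the zeta series is dominated by the `r`-th power of the `p`-series, which converges since
`p > 1`. The same bound dominates the series of `Li(w; z)` uniformly on the closed unit disk, so
by the Weierstrass M-test `Li(w; ·)` is continuous there, and its value at `1` is `ζ(w)`.
-/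

open scoped BigOperators

namespace MZVRH

noncomputable section

open Filter Topology

lemma summable_fin_pi_prod_of_nonneg {β : Type*} (r : ℕ) {h : β → ℝ} (h0 : ∀ b, 0 ≤ h b)
    (hs : Summable h) : Summable fun m : Fin r → β => ∏ i, h (m i) := by
  induction r with
  | zero => exact .of_finite
  | succ r ih =>
    have hprod : Summable fun p : β × (Fin r → β) => h p.1 * ∏ i, h (p.2 i) :=
      Summable.mul_of_nonneg (f := h) (g := fun m : Fin r → β => ∏ i, h (m i)) hs ih h0
        fun m => Finset.prod_nonneg fun i _ => h0 _
    refine (hprod.comp_injective (Fin.consEquiv fun _ : Fin (r + 1) => β).symm.injective).congr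
      fun m => ?_
    simp [Fin.consEquiv, Fin.prod_univ_succ, Fin.tail]

namespace Tuples

variable {r : ℕ}

def gap (n : Tuples r) (i : Fin r) : ℕ :=
  if h : (i : ℕ) + 1 < r then n.1 i - n.1 ⟨i + 1, h⟩ else n.1 i

lemma one_le_gap (n : Tuples r) (i : Fin r) : 1 ≤ gap n i := by
  unfold gap
  split_ifs with h
  · have := n.2.1 (show i < ⟨(i : ℕ) + 1, h⟩ from Fin.lt_def.2 (Nat.lt_succ_self _))
    omega
  · exact n.2.2 i

lemma gap_le (n : Tuples r) (i : Fin r) : gap n i ≤ n.1 i := by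
  unfold gap
  split_ifs <;> omega

lemma gap_injective : Function.Injective (gap : Tuples r → Fin r → ℕ) := by
  intro n n' h
  suffices ∀ d (i : Fin r), (i : ℕ) + d + 1 = r → n.1 i = n'.1 i from
    Subtype.ext <| funext fun i => this (r - i - 1) i (by omega)
  intro d
  induction d with
  | zero =>
    intro i hi
    simpa [gap, show ¬ (i : ℕ) + 1 < r by omega] using congrFun h i
  | succ d ih =>
    intro i hi
    have hlt : (i : ℕ) + 1 < r := by omega
    have hnext := ih ⟨i + 1, hlt⟩ (by simp only; omega)
    have hn := n.2.1 (show i < ⟨(i : ℕ) + 1, hlt⟩ from Fin.lt_def.2 (Nat.lt_succ_self _))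
    have hn' := n'.2.1 (show i < ⟨(i : ℕ) + 1, hlt⟩ from Fin.lt_def.2 (Nat.lt_succ_self _))
    have hgap := congrFun h i
    simp only [gap, dif_pos hlt] at hgap
    omega

lemma prod_gap_rpow_le (n : Tuples (r + 1)) :
    ∏ i, (gap n i : ℝ) ^ (1 + ((r + 1 : ℕ) : ℝ)⁻¹) ≤ n.1 0 * ∏ i, (n.1 i : ℝ) := by
  calc ∏ i, (gap n i : ℝ) ^ (1 + ((r + 1 : ℕ) : ℝ)⁻¹)
      ≤ ∏ i, (n.1 i : ℝ) * (n.1 0 : ℝ) ^ ((r + 1 : ℕ) : ℝ)⁻¹ := by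
        gcongr with i
        have hgap : (gap n i : ℝ) ≤ n.1 i := by exact_mod_cast gap_le n i
        have hhead : (n.1 i : ℝ) ≤ n.1 0 := by exact_mod_cast n.2.1.antitone (Fin.zero_le i)
        rw [Real.rpow_add (by exact_mod_cast one_le_gap n i), Real.rpow_one]
        gcongr
        exact_mod_cast hgap.trans hhead
    _ = n.1 0 * ∏ i, (n.1 i : ℝ) := by
        rw [Finset.prod_mul_distrib, Finset.prod_const, Finset.card_univ, Fintype.card_fin,
          Real.rpow_inv_natCast_pow (Nat.cast_nonneg _) (Nat.succ_ne_zero r), mul_comm]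

lemma head_mul_prod_le_prod_pow (n : Tuples (r + 1)) {k : Fin (r + 1) → ℕ} (hk0 : 2 ≤ k 0)
    (hk : ∀ i, 1 ≤ k i) : n.1 0 * ∏ i, (n.1 i : ℝ) ≤ ∏ i, (n.1 i : ℝ) ^ k i := by
  have hn : ∀ i, (1 : ℝ) ≤ n.1 i := fun i => by exact_mod_cast n.2.2 i
  rw [Fin.prod_univ_succ, Fin.prod_univ_succ, ← mul_assoc, ← sq]
  have hrest : ∏ i : Fin r, (n.1 i.succ : ℝ) ≤ ∏ i : Fin r, (n.1 i.succ : ℝ) ^ k i.succ :=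
    Finset.prod_le_prod (fun i _ => by positivity)
      fun i _ => le_self_pow₀ (hn _) (Nat.one_le_iff_ne_zero.1 (hk _))
  exact mul_le_mul (pow_le_pow_right₀ (hn 0) hk0) hrest (by positivity) (by positivity)

lemma summable_inv_prod_pow {k : Fin (r + 1) → ℕ} (hk0 : 2 ≤ k 0) (hk : ∀ i, 1 ≤ k i) :
    Summable fun n : Tuples (r + 1) => (∏ i, (n.1 i : ℝ) ^ k i)⁻¹ := by
  set p : ℝ := 1 + ((r + 1 : ℕ) : ℝ)⁻¹
  have hp : 1 < p := lt_add_of_pos_right 1 (by positivity)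
  have hdom : Summable fun n : Tuples (r + 1) => ∏ i, ((gap n i : ℝ) ^ p)⁻¹ :=
    (summable_fin_pi_prod_of_nonneg (r + 1) (fun _ => by positivity)
      (Real.summable_nat_rpow_inv.2 hp)).comp_injective gap_injective
  refine hdom.of_nonneg_of_le (fun n => ?_) fun n => ?_
  · exact inv_nonneg.2 <| Finset.prod_nonneg fun i _ => by positivity
  · rw [Finset.prod_inv_distrib]
    have hpos : 0 < ∏ i, (gap n i : ℝ) ^ p :=
      Finset.prod_pos fun i _ => Real.rpow_pos_of_pos (by exact_mod_cast one_le_gap n i) _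
    exact inv_anti₀ hpos <| (prod_gap_rpow_le n).trans (head_mul_prod_le_prod_pow n hk0 hk)

end Tuples

lemma norm_prod_natCast_pow {ι : Type*} [Fintype ι] (n k : ι → ℕ) :
    ‖∏ i, (n i : ℂ) ^ k i‖ = ∏ i, (n i : ℝ) ^ k i := by
  simp [norm_prod]

lemma summable_inv_prod_pow_cons {k : ℕ} {ks : List ℕ} (hk : 2 ≤ k)
    (hks : ∀ j ∈ ks, 1 ≤ j) :
    Summable fun n : Tuples (k :: ks).length => (∏ i, (n.1 i : ℝ) ^ (k :: ks).get i)⁻¹ :=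
  Tuples.summable_inv_prod_pow hk fun i => by
    rcases List.mem_cons.1 (List.get_mem (k :: ks) i) with h | h
    · omega
    · exact hks _ h

lemma summable_zetaComp_cons {k : ℕ} {ks : List ℕ} (hk : 2 ≤ k)
    (hks : ∀ j ∈ ks, 1 ≤ j) :
    Summable fun n : Tuples (k :: ks).length =>
      1 / ∏ i : Fin (k :: ks).length, (n.1 i : ℂ) ^ (k :: ks).get i :=
  .of_norm <| by simpa [norm_prod_natCast_pow] using summable_inv_prod_pow_cons hk hks

lemma continuousOn_LiComp_cons {k : ℕ} {ks : List ℕ} (hk : 2 ≤ k)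
    (hks : ∀ j ∈ ks, 1 ≤ j) :
    ContinuousOn (LiComp (k :: ks)) (Metric.closedBall 0 1) := by
  unfold LiComp
  simp only [List.length_cons, Nat.zero_lt_succ, dif_pos]
  refine continuousOn_tsum (fun n => ((continuous_pow _).div_const _).continuousOn)
    (summable_inv_prod_pow_cons hk hks) fun n z hz => ?_
  rw [norm_div, norm_pow, norm_prod_natCast_pow, div_eq_inv_mul]
  refine mul_le_of_le_one_right (by positivity) (pow_le_one₀ (norm_nonneg z) ?_)
  simpa using hz

lemma LiComp_one (ks : List ℕ) : LiComp ks 1 = zetaComp ks := by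
  simp [LiComp, zetaComp]

lemma one_le_of_mem_toComp {w : Word} {k : ℕ} (h : k ∈ toComp w) : 1 ≤ k := by
  induction w generalizing k with
  | nil => simp [toComp] at h
  | cons b t ih =>
    cases b
    · rcases ht : toComp t with _ | ⟨k', ks⟩ <;> simp only [toComp, ht] at h
      · simp at h
      · rcases List.mem_cons.1 h with rfl | h
        · omega
        · exact ih (ht ▸ List.mem_cons_of_mem _ h)
    · rcases List.mem_cons.1 h with rfl | h
      · exact le_rfl
      · exact ih h

lemma toComp_ne_nil {w : Word} (h : true ∈ w) : toComp w ≠ [] := by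
  induction w with
  | nil => simp at h
  | cons b t ih =>
    cases b
    · rcases ht : toComp t with _ | ⟨_, _⟩
      · exact absurd ht (ih (by simpa using h))
      · simp [toComp, ht]
    · simp [toComp]

lemma exists_toComp_eq_cons {w : Word} (hne : w ≠ []) (hw : BeginsEndsX0X1 w) :
    ∃ k ks, toComp w = k :: ks ∧ 2 ≤ k := by
  obtain ⟨hhead, hlast⟩ := hw.resolve_left hne
  obtain ⟨t, rfl⟩ := List.head?_eq_some_iff.1 hhead
  have ht : true ∈ t := by simpa using List.mem_of_getLast? hlast
  obtain ⟨k, ks, hks⟩ := List.exists_cons_of_ne_nil (toComp_ne_nil ht)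
  exact ⟨k + 1, ks, by simp [toComp, hks], by
    have := one_le_of_mem_toComp (w := t) (k := k) (by simp [hks]); omega⟩

/-- For a nonempty word `w ∈ S^{10}`, the series defining `ζ(w)` converges and
`Li(w; z) → ζ(w)` as `z → 1⁻` within `(0,1)`. -/
theorem Li_tendsto_zeta (w : Word) (hne : w ≠ []) (hw : BeginsEndsX0X1 w) :
    Summable (fun n : Tuples (toComp w).length =>
        1 / ∏ i : Fin (toComp w).length, (n.1 i : ℂ) ^ (toComp w).get i) ∧
    Filter.Tendsto (fun z : ℝ => LiComp (toComp w) (z : ℂ))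
      (nhdsWithin 1 (Set.Ioo (0 : ℝ) 1)) (nhds (zetaComp (toComp w))) := by
  obtain ⟨k, ks, hcomp, hk⟩ := exists_toComp_eq_cons hne hw
  have hks : ∀ j ∈ ks, 1 ≤ j := fun j hj =>
    one_le_of_mem_toComp (hcomp ▸ List.mem_cons_of_mem k hj)
  rw [hcomp]
  refine ⟨summable_zetaComp_cons hk hks, ?_⟩
  have hreal :
      Tendsto (fun z : ℝ => (z : ℂ)) (𝓝[Set.Ioo 0 1] 1) (𝓝[Metric.closedBall 0 1] 1) :=
    tendsto_nhdsWithin_iff.2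
      ⟨Complex.continuous_ofReal.continuousWithinAt.tendsto.trans (by simp),
        eventually_nhdsWithin_of_forall fun z hz => by simp [abs_of_pos hz.1, hz.2.le]⟩
  simpa [LiComp_one, Function.comp_def] using
    ((continuousOn_LiComp_cons hk hks) 1 (by simp)).tendsto.comp hreal

end

end MZVRH
end
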